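/- In a syntactically homogeneous algebraic circuit F, for any two gate nodes w, v with w in the subcircuit rooted at v and syntactic degrees satisfying 2·deg(w) > deg(v), the partial-derivative polynomial ∂w f_v (defined recursively: ∂w f_v = 0 if w ∉ F_v; = 1 if w = v; = ∂w f_{v₁} + ∂w f_{v₂} if v = v₁+v₂; = (∂w f_{v₁})·f_{v₂} if v is a product with the higher-degree child v₁ containing w) has total degree at most deg(v) − deg(w). -/
import Mathlib


/-- Algebraic circuits (as terms) over variables `σ` and constants `R`. -/
inductive Circuit (σ R : Type) where
  | var : σ → Circuit σ R
  | const : R → Circuit σ R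
  | add : Circuit σ R → Circuit σ R → Circuit σ R
  | mul : Circuit σ R → Circuit σ R → Circuit σ R
deriving DecidableEq

namespace Circuit

variable {σ R : Type}

/-- Syntactic degree: 0 for constants, 1 for variables, max for `+`, sum for `×`. -/
def sdeg : Circuit σ R → ℕ
  | var _ => 1
  | const _ => 0
  | add a b => max a.sdeg b.sdeg
  | mul a b => a.sdeg + b.sdeg

/-- The polynomial computed at (the root of) a circuit. -/
noncomputable def eval [CommRing R] : Circuit σ R → MvPolynomial σ R
  | var x => MvPolynomial.X x
  | const r => MvPolynomial.C r
  | add a b => a.eval + b.eval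
  | mul a b => a.eval * b.eval

/-- `Occurs w v`: the node `w` occurs in the subcircuit rooted at `v`. -/
def Occurs (w : Circuit σ R) : Circuit σ R → Prop
  | var x => w = var x
  | const r => w = const r
  | add a b => w = add a b ∨ Occurs w a ∨ Occurs w b
  | mul a b => w = mul a b ∨ Occurs w a ∨ Occurs w b

/-- Syntactic homogeneity: every `+` gate has children of equal syntactic degree. -/
def Homog : Circuit σ R → Prop
  | var _ => True
  | const _ => True
  | add a b => a.sdeg = b.sdeg ∧ Homog a ∧ Homog b
  | mul a b => Homog a ∧ Homog b

/-- The partial-derivative polynomial `∂w f_v`: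
`1` if `v = w`; sum of derivatives of the children for `+` gates; for `×` gates,
the derivative of the child of (weakly) higher syntactic degree times the polynomial
computed by the other child; `0` at leaves different from `w` (so `∂w f_v = 0`
whenever `w` does not occur in `v`). -/
noncomputable def pderiv [CommRing R] [DecidableEq σ] [DecidableEq R] (w : Circuit σ R) :
    Circuit σ R → MvPolynomial σ R
  | var x => if w = var x then 1 else 0
  | const r => if w = const r then 1 else 0
  | add a b => if w = add a b then 1 else pderiv w a + pderiv w b
  | mul a b =>
      if w = mul a b then 1
      else if b.sdeg ≤ a.sdeg then pderiv w a * b.eval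
      else pderiv w b * a.eval

end Circuit


namespace Circuit
variable {σ R : Type}

lemma sdeg_le_of_occurs {w v : Circuit σ R} (h : Occurs w v) : w.sdeg ≤ v.sdeg := by
  induction v with
  | var x => simp [Occurs] at h; subst h; exact le_rfl
  | const r => simp [Occurs] at h; subst h; exact le_rfl
  | add a b iha ihb =>
    rcases h with h | h | h
    · subst h; exact le_rfl
    · exact le_trans (iha h) (le_max_left _ _)
    · exact le_trans (ihb h) (le_max_right _ _)
  | mul a b iha ihb =>
    rcases h with h | h | h
    · subst h; exact le_rfl
    · exact le_trans (iha h) (Nat.le_add_right _ _)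
    · exact le_trans (ihb h) (Nat.le_add_left _ _)

lemma pderiv_of_not_occurs [CommRing R] [DecidableEq σ] [DecidableEq R]
    {w v : Circuit σ R} (h : ¬ Occurs w v) : pderiv w v = 0 := by
  induction v with
  | var x => simp only [Occurs] at h; simp [pderiv, h]
  | const r => simp only [Occurs] at h; simp [pderiv, h]
  | add a b iha ihb =>
    simp only [Occurs, not_or] at h
    simp [pderiv, h.1, iha h.2.1, ihb h.2.2]
  | mul a b iha ihb =>
    simp only [Occurs, not_or] at h
    by_cases hd : b.sdeg ≤ a.sdeg <;> simp [pderiv, h.1, hd, iha h.2.1, ihb h.2.2]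

lemma totalDegree_eval_le [CommRing R] (v : Circuit σ R) :
    (eval v).totalDegree ≤ v.sdeg := by
  induction v with
  | var x =>
    simp only [eval, sdeg]
    exact le_trans (MvPolynomial.totalDegree_monomial_le (Finsupp.single x 1) (1 : R))
      (by simp)
  | const r => simp [eval, sdeg, MvPolynomial.totalDegree_C]
  | add a b iha ihb =>
    exact le_trans (MvPolynomial.totalDegree_add _ _) (max_le_max iha ihb)
  | mul a b iha ihb =>
    exact le_trans (MvPolynomial.totalDegree_mul _ _) (Nat.add_le_add iha ihb)

lemma totalDegree_pderiv_le [CommRing R] [DecidableEq σ] [DecidableEq R]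
    (w v : Circuit σ R) (hwv : Occurs w v) :
    (pderiv w v).totalDegree ≤ v.sdeg - w.sdeg := by
  induction v with
  | var x => simp only [Occurs] at hwv; simp [pderiv, hwv]
  | const r => simp only [Occurs] at hwv; simp [pderiv, hwv]
  | add a b iha ihb =>
    by_cases h : w = add a b
    · subst h; simp [pderiv]
    have ha : (pderiv w a).totalDegree ≤ a.sdeg - w.sdeg := by
      by_cases hoa : Occurs w a
      · exact iha hoa
      · simp [pderiv_of_not_occurs hoa]
    have hb : (pderiv w b).totalDegree ≤ b.sdeg - w.sdeg := by
      by_cases hob : Occurs w b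
      · exact ihb hob
      · simp [pderiv_of_not_occurs hob]
    simp only [pderiv, if_neg h, sdeg]
    refine le_trans (MvPolynomial.totalDegree_add _ _) (max_le ?_ ?_)
    · exact le_trans ha (Nat.sub_le_sub_right (le_max_left _ _) _)
    · exact le_trans hb (Nat.sub_le_sub_right (le_max_right _ _) _)
  | mul a b iha ihb =>
    by_cases h : w = mul a b
    · subst h; simp [pderiv]
    simp only [pderiv, if_neg h, sdeg]
    by_cases hd : b.sdeg ≤ a.sdeg
    · rw [if_pos hd]
      by_cases hoa : Occurs w a
      · refine le_trans (MvPolynomial.totalDegree_mul _ _) ?_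
        have h1 := iha hoa
        have h2 := totalDegree_eval_le b
        have h3 := sdeg_le_of_occurs hoa
        omega
      · simp [pderiv_of_not_occurs hoa]
    · rw [if_neg hd]
      by_cases hob : Occurs w b
      · refine le_trans (MvPolynomial.totalDegree_mul _ _) ?_
        have h1 := ihb hob
        have h2 := totalDegree_eval_le a
        have h3 := sdeg_le_of_occurs hob
        omega
      · simp [pderiv_of_not_occurs hob]

end Circuit

theorem stmt19 {σ R : Type} [CommRing R] [DecidableEq σ] [DecidableEq R]
    (F v w : Circuit σ R)
    (hF : Circuit.Homog F) (hvF : Circuit.Occurs v F) (hwv : Circuit.Occurs w v)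
    (hdeg : v.sdeg < 2 * w.sdeg) :
    (Circuit.pderiv w v).totalDegree ≤ v.sdeg - w.sdeg := by
  exact Circuit.totalDegree_pderiv_le w v hwv
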